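/- Suppose for each vertex v_m of a polytope I = conv{v_1,…,v_M} there is an input sequence u^m = (u^m_0,…,u^m_{N-1}) with each u^m_i in a convex set U, satisfying a constraint system of the form ⟨G_j, x̄_t(v_m, u^m)⟩ + ∑_{i<t} c_{j,i} + ∑_{i<t} ∑_l w_{j,i,l} φ_l(‖F_l x̄_i(v_m,u^m)‖, ‖H_l u^m_i‖) ≤ g_j for all j, t, where x̄_t(x, u) = A^t x + ∑_{i<t} A^{t-1-i} B u_i, the c_{j,i} and w_{j,i,l} ≥ 0 are constants, and each φ_l is convex and non-decreasing in each argument. Then for every x ∈ I, writing x = ∑_m θ_m v_m as a convex combination, the convex-combination input sequence u_i = ∑_m θ_m u^m_i lies in U^N and satisfies the same constraint system with initial state x. -/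

import Mathlib

/-!
The nominal state `x̄ₜ(x, u)` is linear in the pair `(x, u)`, and
`(x, u) ↦ φ (‖F x̄ᵢ(x, u)‖) (‖H uᵢ‖)` is convex because `φ` is convex and non-decreasing in each
argument on the nonnegative quadrant while both norms are convex. Hence the left-hand side of each
constraint is a convex function of `(x, u)`, its sublevel sets are convex, and the vertex data
`(vₘ, uᵐ)` lying in such a sublevel set forces their convex combination into it as well.
-/

open Matrix Finset

/-- Nominal state after `t` steps of the discrete LTI system starting at `x₀`
with input sequence `u`. -/
noncomputable def nominalState {n m : ℕ} (A : Matrix (Fin n) (Fin n) ℝ)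
    (B : Matrix (Fin n) (Fin m) ℝ) (t : ℕ) (x₀ : Fin n → ℝ)
    (u : ℕ → Fin m → ℝ) : Fin n → ℝ :=
  (A ^ t).mulVec x₀ + ∑ i ∈ range t, (A ^ (t - 1 - i)).mulVec (B.mulVec (u i))

section Convexity

variable {V : Type*} [AddCommGroup V] [Module ℝ V] {s : Set V}

theorem ConvexOn.sum {ι : Type*} (t : Finset ι) {f : ι → V → ℝ} (hs : Convex ℝ s)
    (hf : ∀ i ∈ t, ConvexOn ℝ s (f i)) : ConvexOn ℝ s fun x => ∑ i ∈ t, f i x := by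
  simpa only [Finset.sum_fn] using
    Finset.sum_induction f (ConvexOn ℝ s) (fun _ _ => ConvexOn.add) (convexOn_const 0 hs) hf

theorem ConvexOn.comp₂ {φ : ℝ → ℝ → ℝ}
    (hφ : ConvexOn ℝ {p : ℝ × ℝ | 0 ≤ p.1 ∧ 0 ≤ p.2} fun p => φ p.1 p.2)
    (hφ₁ : ∀ b, 0 ≤ b → MonotoneOn (fun a => φ a b) (Set.Ici 0))
    (hφ₂ : ∀ a, 0 ≤ a → MonotoneOn (fun b => φ a b) (Set.Ici 0))
    {f₁ f₂ : V → ℝ} (hf₁ : ConvexOn ℝ s f₁) (hf₂ : ConvexOn ℝ s f₂)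
    (hf₁₀ : ∀ x ∈ s, 0 ≤ f₁ x) (hf₂₀ : ∀ x ∈ s, 0 ≤ f₂ x) :
    ConvexOn ℝ s fun x => φ (f₁ x) (f₂ x) := by
  refine ⟨hf₁.1, fun x hx y hy a b ha hb hab => ?_⟩
  have hz : a • x + b • y ∈ s := hf₁.1 hx hy ha hb hab
  have hsum₁ : 0 ≤ a • f₁ x + b • f₁ y := by
    have := hf₁₀ x hx; have := hf₁₀ y hy; positivity
  have hsum₂ : 0 ≤ a • f₂ x + b • f₂ y := by
    have := hf₂₀ x hx; have := hf₂₀ y hy; positivity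
  calc φ (f₁ (a • x + b • y)) (f₂ (a • x + b • y))
      ≤ φ (a • f₁ x + b • f₁ y) (f₂ (a • x + b • y)) :=
        hφ₁ _ (hf₂₀ _ hz) (hf₁₀ _ hz) hsum₁ (hf₁.2 hx hy ha hb hab)
    _ ≤ φ (a • f₁ x + b • f₁ y) (a • f₂ x + b • f₂ y) :=
        hφ₂ _ hsum₁ (hf₂₀ _ hz) hsum₂ (hf₂.2 hx hy ha hb hab)
    _ ≤ a • φ (f₁ x) (f₂ x) + b • φ (f₁ y) (f₂ y) :=
        hφ.2 (x := (f₁ x, f₂ x)) (y := (f₁ y, f₂ y)) ⟨hf₁₀ x hx, hf₂₀ x hx⟩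
          ⟨hf₁₀ y hy, hf₂₀ y hy⟩ ha hb hab

theorem convexOn_comp_norm_linearMap {E E' : Type*} [SeminormedAddCommGroup E] [NormedSpace ℝ E]
    [SeminormedAddCommGroup E'] [NormedSpace ℝ E'] {φ : ℝ → ℝ → ℝ}
    (hφ : ConvexOn ℝ {p : ℝ × ℝ | 0 ≤ p.1 ∧ 0 ≤ p.2} fun p => φ p.1 p.2)
    (hφ₁ : ∀ b, 0 ≤ b → MonotoneOn (fun a => φ a b) (Set.Ici 0))
    (hφ₂ : ∀ a, 0 ≤ a → MonotoneOn (fun b => φ a b) (Set.Ici 0))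
    (F : V →ₗ[ℝ] E) (H : V →ₗ[ℝ] E') :
    ConvexOn ℝ Set.univ fun x => φ ‖F x‖ ‖H x‖ :=
  hφ.comp₂ hφ₁ hφ₂ ((convexOn_norm convex_univ).comp_linearMap F)
    ((convexOn_norm convex_univ).comp_linearMap H) (fun _ _ => norm_nonneg _)
    fun _ _ => norm_nonneg _

end Convexity

section NominalState

variable {n m : ℕ} (A : Matrix (Fin n) (Fin n) ℝ) (B : Matrix (Fin n) (Fin m) ℝ)

noncomputable def nominalStateₗ (t : ℕ) : (Fin n → ℝ) × (ℕ → Fin m → ℝ) →ₗ[ℝ] Fin n → ℝ :=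
  (A ^ t).mulVecLin ∘ₗ LinearMap.fst ℝ _ _ +
    ∑ i ∈ range t, (A ^ (t - 1 - i)).mulVecLin ∘ₗ B.mulVecLin ∘ₗ LinearMap.proj i ∘ₗ
      LinearMap.snd ℝ _ _

@[simp]
theorem nominalStateₗ_apply (t : ℕ) (p : (Fin n → ℝ) × (ℕ → Fin m → ℝ)) :
    nominalStateₗ A B t p = nominalState A B t p.1 p.2 := by
  simp [nominalStateₗ, nominalState, LinearMap.sum_apply]

end NominalState

theorem convexOn_nominalConstraint {n m : ℕ} {ι E E' : Type*} [Fintype ι]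
    [SeminormedAddCommGroup E] [NormedSpace ℝ E]
    [SeminormedAddCommGroup E'] [NormedSpace ℝ E']
    (A : Matrix (Fin n) (Fin n) ℝ) (B : Matrix (Fin n) (Fin m) ℝ)
    (G : Fin n → ℝ) (C : ℝ) (w : ℕ → ι → ℝ) (hw : ∀ i l, 0 ≤ w i l)
    (φ : ι → ℝ → ℝ → ℝ)
    (hφ : ∀ l, ConvexOn ℝ {p : ℝ × ℝ | 0 ≤ p.1 ∧ 0 ≤ p.2} fun p => φ l p.1 p.2)
    (hφ₁ : ∀ l b, 0 ≤ b → MonotoneOn (fun a => φ l a b) (Set.Ici 0))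
    (hφ₂ : ∀ l a, 0 ≤ a → MonotoneOn (fun b => φ l a b) (Set.Ici 0))
    (F : ι → (Fin n → ℝ) →ₗ[ℝ] E) (H : ι → (Fin m → ℝ) →ₗ[ℝ] E') (t : ℕ) :
    ConvexOn ℝ Set.univ fun p : (Fin n → ℝ) × (ℕ → Fin m → ℝ) =>
      G ⬝ᵥ nominalState A B t p.1 p.2 + C +
        ∑ i ∈ range t, ∑ l, w i l * φ l ‖F l (nominalState A B i p.1 p.2)‖ ‖H l (p.2 i)‖ := by
  have hlin : ConvexOn ℝ Set.univ fun p : (Fin n → ℝ) × (ℕ → Fin m → ℝ) =>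
      G ⬝ᵥ nominalState A B t p.1 p.2 :=
    ((dotProductBilin ℝ ℝ G ∘ₗ nominalStateₗ A B t).convexOn convex_univ).congr
      fun p _ => by simp
  refine (hlin.add_const C).add <|
    ConvexOn.sum _ convex_univ fun i _ => ConvexOn.sum _ convex_univ fun l _ => ?_
  have := convexOn_comp_norm_linearMap (hφ l) (hφ₁ l) (hφ₂ l) (F l ∘ₗ nominalStateₗ A B i)
    (H l ∘ₗ LinearMap.proj i ∘ₗ LinearMap.snd ℝ _ _)
  simpa using this.smul (hw i l)

/-- Core of Theorem 1 (recursive feasibility): if the tightened RMPC constraint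
system is feasible at every vertex of the polytope `I = conv{v₁,…,v_M}` with
inputs in a convex set `U`, then for every convex combination `x = ∑ θₘ vₘ`,
the convex-combination input sequence is in `U` and satisfies the same
constraint system with initial state `x`. -/
theorem rmpc_recursive_feasibility_core {E F' : Type*}
    [NormedAddCommGroup E] [NormedSpace ℝ E]
    [NormedAddCommGroup F'] [NormedSpace ℝ F']
    (n m N M ng nl : ℕ)
    (A : Matrix (Fin n) (Fin n) ℝ) (B : Matrix (Fin n) (Fin m) ℝ)
    (U : Set (Fin m → ℝ)) (hU : Convex ℝ U)
    (G : Fin ng → Fin n → ℝ) (g : Fin ng → ℝ)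
    (c : Fin ng → ℕ → ℝ)
    (w : Fin ng → ℕ → Fin nl → ℝ) (hw : ∀ j i l, 0 ≤ w j i l)
    (φ : Fin nl → ℝ → ℝ → ℝ)
    (hφconv : ∀ l, ConvexOn ℝ {p : ℝ × ℝ | 0 ≤ p.1 ∧ 0 ≤ p.2}
      (fun p => φ l p.1 p.2))
    (hφmono1 : ∀ l (b : ℝ), 0 ≤ b → MonotoneOn (fun a => φ l a b) (Set.Ici 0))
    (hφmono2 : ∀ l (a : ℝ), 0 ≤ a → MonotoneOn (fun b => φ l a b) (Set.Ici 0))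
    (Fl : Fin nl → ((Fin n → ℝ) →ₗ[ℝ] E))
    (Hl : Fin nl → ((Fin m → ℝ) →ₗ[ℝ] F'))
    (v : Fin M → Fin n → ℝ) (u : Fin M → ℕ → Fin m → ℝ)
    (huU : ∀ mm, ∀ i < N, u mm i ∈ U)
    (hfeas : ∀ mm, ∀ j, ∀ t ≤ N,
      G j ⬝ᵥ nominalState A B t (v mm) (u mm)
        + (∑ i ∈ range t, c j i)
        + ∑ i ∈ range t, ∑ l, w j i l *
            φ l ‖Fl l (nominalState A B i (v mm) (u mm))‖ ‖Hl l (u mm i)‖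
      ≤ g j)
    (θ : Fin M → ℝ) (hθ : ∀ mm, 0 ≤ θ mm) (hθ1 : ∑ mm, θ mm = 1)
    (x : Fin n → ℝ) (hx : x = ∑ mm, θ mm • v mm) :
    (∀ i < N, (∑ mm, θ mm • u mm i) ∈ U) ∧
    (∀ j, ∀ t ≤ N,
      G j ⬝ᵥ nominalState A B t x (fun i => ∑ mm, θ mm • u mm i)
        + (∑ i ∈ range t, c j i)
        + ∑ i ∈ range t, ∑ l, w j i l *
            φ l ‖Fl l (nominalState A B i x (fun i => ∑ mm, θ mm • u mm i))‖
                ‖Hl l (∑ mm, θ mm • u mm i)‖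
      ≤ g j) := by
  have hmix : ∑ mm, θ mm • (v mm, u mm) = (x, fun i => ∑ mm, θ mm • u mm i) := by
    ext <;> simp [hx, Prod.fst_sum, Prod.snd_sum, Finset.sum_apply]
  refine ⟨fun i hi => hU.sum_mem (fun mm _ => hθ mm) hθ1 fun mm _ => huU mm i hi,
    fun j t ht => ?_⟩
  have hsublevel := ((convexOn_nominalConstraint A B (G j) (∑ i ∈ range t, c j i) (w j) (hw j)
    φ hφconv hφmono1 hφmono2 Fl Hl t).convex_le (g j)).sum_mem (z := fun mm => (v mm, u mm))
    (fun mm _ => hθ mm) hθ1 fun mm _ => ⟨trivial, hfeas mm j t ht⟩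
  rw [hmix] at hsublevel
  exact hsublevel.2
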